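/- The subgroup {A = (a, b; c, d) ∈ Γ(2) : c ≡ 0 (mod 4)} of SL(2,ℤ) is generated by the four matrices −I, A₁ = (1, 2; 0, 1), A₂ = (5, −4; 4, −3) and A₃ = (−3, 2; −8, 5). -/
import Mathlib


open Matrix CongruenceSubgroup

/-- The subgroup of `SL(2, ℤ)` of matrices whose lower-left entry is divisible by `n`. -/
def lowerLeftDvd (n : ℤ) : Subgroup (Matrix.SpecialLinearGroup (Fin 2) ℤ) where
  carrier := {A | n ∣ (A : Matrix (Fin 2) (Fin 2) ℤ) 1 0}
  one_mem' := by simp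
  mul_mem' := by
    intro A B hA hB
    have h : ((A * B : Matrix.SpecialLinearGroup (Fin 2) ℤ) : Matrix (Fin 2) (Fin 2) ℤ) 1 0 =
        (A : Matrix (Fin 2) (Fin 2) ℤ) 1 0 * (B : Matrix (Fin 2) (Fin 2) ℤ) 0 0 +
        (A : Matrix (Fin 2) (Fin 2) ℤ) 1 1 * (B : Matrix (Fin 2) (Fin 2) ℤ) 1 0 := by
      rw [Matrix.SpecialLinearGroup.coe_mul, Matrix.mul_apply, Fin.sum_univ_two]
    rw [Set.mem_setOf_eq, h]
    exact dvd_add (hA.mul_right _) (hB.mul_left _)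
  inv_mem' := by
    intro A hA
    have h : ((A⁻¹ : Matrix.SpecialLinearGroup (Fin 2) ℤ) : Matrix (Fin 2) (Fin 2) ℤ) 1 0 =
        -((A : Matrix (Fin 2) (Fin 2) ℤ) 1 0) := by
      rw [Matrix.SpecialLinearGroup.coe_inv, Matrix.adjugate_fin_two]
      simp
    rw [Set.mem_setOf_eq, h]
    exact dvd_neg.mpr hA

section AuxHelpers

local notation "SL2'" => Matrix.SpecialLinearGroup (Fin 2) ℤ

private lemma aux_coe_mul (w g : SL2') (p q r s : ℤ)
    (hw : (w : Matrix (Fin 2) (Fin 2) ℤ) = !![p,q;r,s]) :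
    ((w * g : SL2') : Matrix (Fin 2) (Fin 2) ℤ) =
      !![p * (g : Matrix (Fin 2) (Fin 2) ℤ) 0 0 + q * (g : Matrix (Fin 2) (Fin 2) ℤ) 1 0,
         p * (g : Matrix (Fin 2) (Fin 2) ℤ) 0 1 + q * (g : Matrix (Fin 2) (Fin 2) ℤ) 1 1;
         r * (g : Matrix (Fin 2) (Fin 2) ℤ) 0 0 + s * (g : Matrix (Fin 2) (Fin 2) ℤ) 1 0,
         r * (g : Matrix (Fin 2) (Fin 2) ℤ) 0 1 + s * (g : Matrix (Fin 2) (Fin 2) ℤ) 1 1] := by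
  rw [Matrix.SpecialLinearGroup.coe_mul, hw]
  nth_rewrite 1 [Matrix.eta_fin_two (g : Matrix (Fin 2) (Fin 2) ℤ)]
  rw [Matrix.mul_fin_two]

private lemma aux_coe_inv (w : SL2') (p q r s : ℤ)
    (hw : (w : Matrix (Fin 2) (Fin 2) ℤ) = !![p,q;r,s]) :
    ((w⁻¹ : SL2') : Matrix (Fin 2) (Fin 2) ℤ) = !![s,-q;-r,p] := by
  rw [Matrix.SpecialLinearGroup.coe_inv, hw, Matrix.adjugate_fin_two]
  simp

private lemma aux_cast1 (a : ℤ) (h : (2:ℤ) ∣ a - 1) : ((a : ZMod 2) = 1) := by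
  have h2 := (ZMod.intCast_zmod_eq_zero_iff_dvd (a-1) 2).mpr h
  push_cast at h2
  linear_combination h2

private lemma aux_cast0 (a : ℤ) (h : (2:ℤ) ∣ a) : ((a : ZMod 2) = 0) :=
  (ZMod.intCast_zmod_eq_zero_iff_dvd a 2).mpr h

private lemma aux_odd (a : ℤ) (h : ((a : ZMod 2) = 1)) : (2:ℤ) ∣ a - 1 := by
  have h2 : ((a - 1 : ℤ) : ZMod 2) = 0 := by push_cast [h]; ring
  exact (ZMod.intCast_zmod_eq_zero_iff_dvd _ 2).mp h2

private lemma aux_even (b : ℤ) (h : ((b : ZMod 2) = 0)) : (2:ℤ) ∣ b :=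
  (ZMod.intCast_zmod_eq_zero_iff_dvd _ 2).mp h

private lemma aux_memH (w : SL2') (p q r s : ℤ)
    (hw : (w : Matrix (Fin 2) (Fin 2) ℤ) = !![p,q;r,s])
    (hp : (2:ℤ) ∣ p - 1) (hq : (2:ℤ) ∣ q) (hr : (4:ℤ) ∣ r) (hs : (2:ℤ) ∣ s - 1) :
    w ∈ Gamma 2 ⊓ lowerLeftDvd 4 := by
  have e00 : (w : Matrix (Fin 2) (Fin 2) ℤ) 0 0 = p := by rw [hw]; simp
  have e01 : (w : Matrix (Fin 2) (Fin 2) ℤ) 0 1 = q := by rw [hw]; simp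
  have e10 : (w : Matrix (Fin 2) (Fin 2) ℤ) 1 0 = r := by rw [hw]; simp
  have e11 : (w : Matrix (Fin 2) (Fin 2) ℤ) 1 1 = s := by rw [hw]; simp
  refine Subgroup.mem_inf.mpr ⟨Gamma_mem.mpr ⟨?_, ?_, ?_, ?_⟩, ?_⟩
  · rw [e00]; exact aux_cast1 p hp
  · rw [e01]; exact aux_cast0 q hq
  · rw [e10]; exact aux_cast0 r (dvd_trans (by norm_num) hr)
  · rw [e11]; exact aux_cast1 s hs
  · show (4:ℤ) ∣ _; rw [e10]; exact hr

private lemma aux_step (G : Subgroup SL2') (w g : SL2') (p q r s : ℤ)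
    (hw : (w : Matrix (Fin 2) (Fin 2) ℤ) = !![p,q;r,s]) (hwG : w ∈ G)
    (hwH : w ∈ Gamma 2 ⊓ lowerLeftDvd 4)
    (hg : g ∈ Gamma 2 ⊓ lowerLeftDvd 4)
    (hrec : ∀ g' : SL2', g' ∈ Gamma 2 ⊓ lowerLeftDvd 4 →
      (g' : Matrix (Fin 2) (Fin 2) ℤ) 0 0
        = p * (g : Matrix (Fin 2) (Fin 2) ℤ) 0 0 + q * (g : Matrix (Fin 2) (Fin 2) ℤ) 1 0 →
      (g' : Matrix (Fin 2) (Fin 2) ℤ) 1 0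
        = r * (g : Matrix (Fin 2) (Fin 2) ℤ) 0 0 + s * (g : Matrix (Fin 2) (Fin 2) ℤ) 1 0 →
      g' ∈ G) :
    g ∈ G := by
  have hcoe := aux_coe_mul w g p q r s hw
  have e0 : ((w * g : SL2') : Matrix (Fin 2) (Fin 2) ℤ) 0 0
      = p * (g : Matrix (Fin 2) (Fin 2) ℤ) 0 0 + q * (g : Matrix (Fin 2) (Fin 2) ℤ) 1 0 := by
    rw [hcoe]; simp
  have e1 : ((w * g : SL2') : Matrix (Fin 2) (Fin 2) ℤ) 1 0
      = r * (g : Matrix (Fin 2) (Fin 2) ℤ) 0 0 + s * (g : Matrix (Fin 2) (Fin 2) ℤ) 1 0 := by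
    rw [hcoe]; simp
  have hmem : w * g ∈ G :=
    hrec (w * g) (Subgroup.mul_mem _ hwH hg) e0 e1
  have h2 : w⁻¹ * (w * g) ∈ G := G.mul_mem (G.inv_mem hwG) hmem
  simpa using h2

private lemma aux_coe_T_zpow (T : SL2')
    (hT : (T : Matrix (Fin 2) (Fin 2) ℤ) = !![1,2;0,1]) (k : ℤ) :
    ((T ^ k : SL2') : Matrix (Fin 2) (Fin 2) ℤ) = !![1, 2*k; 0, 1] := by
  have hTe : T = ModularGroup.T ^ (2:ℤ) := Subtype.ext (by rw [ModularGroup.coe_T_zpow, hT])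
  rw [hTe, ← _root_.zpow_mul, ModularGroup.coe_T_zpow]

private lemma aux_hard (T L N : SL2')
    (hT : (T : Matrix (Fin 2) (Fin 2) ℤ) = !![1,2;0,1])
    (hL : (L : Matrix (Fin 2) (Fin 2) ℤ) = !![1,0;4,1])
    (hN : (N : Matrix (Fin 2) (Fin 2) ℤ) = !![-3,2;4,-3])
    (G : Subgroup SL2') (hTG : T ∈ G) (hLG : L ∈ G) (hNG : N ∈ G)
    (hnegG : (-1 : SL2') ∈ G)
    (g₀ : SL2') (hg₀ : g₀ ∈ Gamma 2 ⊓ lowerLeftDvd 4) : g₀ ∈ G := by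
  have hT' := aux_coe_inv T 1 2 0 1 hT
  have hL' := aux_coe_inv L 1 0 4 1 hL
  have hN' := aux_coe_inv N (-3) 2 4 (-3) hN
  have hTH : T ∈ Gamma 2 ⊓ lowerLeftDvd 4 := aux_memH T 1 2 0 1 hT (by norm_num) (by norm_num) (by norm_num) (by norm_num)
  have hLH : L ∈ Gamma 2 ⊓ lowerLeftDvd 4 := aux_memH L 1 0 4 1 hL (by norm_num) (by norm_num) (by norm_num) (by norm_num)
  have hNH : N ∈ Gamma 2 ⊓ lowerLeftDvd 4 := aux_memH N (-3) 2 4 (-3) hN (by norm_num) (by norm_num) (by norm_num) (by norm_num)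
  have hT'H := (Gamma 2 ⊓ lowerLeftDvd 4).inv_mem hTH
  have hL'H := (Gamma 2 ⊓ lowerLeftDvd 4).inv_mem hLH
  have hN'H := (Gamma 2 ⊓ lowerLeftDvd 4).inv_mem hNH
  have key : ∀ n : ℕ, ∀ g : SL2', g ∈ Gamma 2 ⊓ lowerLeftDvd 4 →
      ((g : Matrix (Fin 2) (Fin 2) ℤ) 1 0).natAbs ≤ n → g ∈ G := by
    intro n
    induction n using Nat.strong_induction_on with
    | _ n IHn =>
    have inner : ∀ m : ℕ, ∀ g : SL2', g ∈ Gamma 2 ⊓ lowerLeftDvd 4 →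
        ((g : Matrix (Fin 2) (Fin 2) ℤ) 1 0).natAbs ≤ n →
        ((g : Matrix (Fin 2) (Fin 2) ℤ) 0 0).natAbs ≤ m → g ∈ G := by
      intro m
      induction m using Nat.strong_induction_on with
      | _ m IHm =>
      intro g hg hcn ham
      obtain ⟨hgΓ, hgD⟩ := Subgroup.mem_inf.mp hg
      obtain ⟨p00, p01, p10, p11⟩ := Gamma_mem.mp hgΓ
      set a := (g : Matrix (Fin 2) (Fin 2) ℤ) 0 0 with ha_def
      set b := (g : Matrix (Fin 2) (Fin 2) ℤ) 0 1 with hb_def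
      set c := (g : Matrix (Fin 2) (Fin 2) ℤ) 1 0 with hc_def
      set d := (g : Matrix (Fin 2) (Fin 2) ℤ) 1 1 with hd_def
      have ha : (2:ℤ) ∣ a - 1 := aux_odd _ p00
      have hb : (2:ℤ) ∣ b := aux_even _ p01
      have hc : (4:ℤ) ∣ c := hgD
      by_cases hc0 : c = 0
      · -- terminal case: g = ± T ^ k
        have hdet : a * d - b * c = 1 := by
          have hdg := g.prop
          rwa [Matrix.det_fin_two] at hdg
        have had : a * d = 1 := by rw [hc0] at hdet; linarith
        obtain ⟨k, hk⟩ := hb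
        rcases Int.mul_eq_one_iff_eq_one_or_neg_one.mp had with ⟨ha1, hd1⟩ | ⟨ha1, hd1⟩
        · have hgeq : g = T ^ k := by
            apply Subtype.ext
            rw [aux_coe_T_zpow T hT k, Matrix.eta_fin_two (g : Matrix (Fin 2) (Fin 2) ℤ)]
            rw [← ha_def, ← hb_def, ← hc_def, ← hd_def, ha1, hd1, hc0, hk]
          rw [hgeq]
          exact G.zpow_mem hTG k
        · have hgeq : g = (-1 : SL2') * T ^ (-k) := by
            apply Subtype.ext
            rw [Matrix.SpecialLinearGroup.coe_mul, Matrix.SpecialLinearGroup.coe_neg,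
              Matrix.SpecialLinearGroup.coe_one, aux_coe_T_zpow T hT (-k),
              Matrix.eta_fin_two (g : Matrix (Fin 2) (Fin 2) ℤ)]
            rw [← ha_def, ← hb_def, ← hc_def, ← hd_def, ha1, hd1, hc0, hk]
            rw [neg_one_mul]
            ext i j
            fin_cases i <;> fin_cases j <;> simp
          rw [hgeq]
          exact G.mul_mem hnegG (G.zpow_mem hTG (-k))
      · -- c ≠ 0 : descent
        have hane : a.natAbs ≠ c.natAbs := by omega
        rcases Nat.lt_or_ge c.natAbs a.natAbs with hlt | hge
        · -- |c| < |a| : reduce a using T or T⁻¹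
          by_cases hch : (a + 2*c).natAbs < a.natAbs
          · refine aux_step G T g 1 2 0 1 hT hTG hTH hg ?_
            intro g' hg' e0 e1
            refine IHm ((g' : Matrix (Fin 2) (Fin 2) ℤ) 0 0).natAbs ?_ g' hg' ?_ le_rfl
            · rw [e0]; omega
            · rw [e1]; omega
          · refine aux_step G T⁻¹ g 1 (-2) 0 1 hT' (G.inv_mem hTG) hT'H hg ?_
            intro g' hg' e0 e1
            refine IHm ((g' : Matrix (Fin 2) (Fin 2) ℤ) 0 0).natAbs ?_ g' hg' ?_ le_rfl
            · rw [e0]; omega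
            · rw [e1]; omega
        · -- |a| < |c| : reduce c using L, L⁻¹, N or N⁻¹
          have hagtc : a.natAbs < c.natAbs := by omega
          by_cases h1 : (c + 4*a).natAbs < c.natAbs
          · refine aux_step G L g 1 0 4 1 hL hLG hLH hg ?_
            intro g' hg' e0 e1
            refine IHn ((g' : Matrix (Fin 2) (Fin 2) ℤ) 1 0).natAbs ?_ g' hg' le_rfl
            rw [e1]; omega
          · by_cases h2 : (c - 4*a).natAbs < c.natAbs
            · refine aux_step G L⁻¹ g 1 0 (-4) 1 hL' (G.inv_mem hLG) hL'H hg ?_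
              intro g' hg' e0 e1
              refine IHn ((g' : Matrix (Fin 2) (Fin 2) ℤ) 1 0).natAbs ?_ g' hg' le_rfl
              rw [e1]; omega
            · by_cases h3 : (4*a - 3*c).natAbs < c.natAbs
              · refine aux_step G N g (-3) 2 4 (-3) hN hNG hNH hg ?_
                intro g' hg' e0 e1
                refine IHn ((g' : Matrix (Fin 2) (Fin 2) ℤ) 1 0).natAbs ?_ g' hg' le_rfl
                rw [e1]; omega
              · refine aux_step G N⁻¹ g (-3) (-2) (-4) (-3) hN' (G.inv_mem hNG) hN'H hg ?_
                intro g' hg' e0 e1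
                refine IHn ((g' : Matrix (Fin 2) (Fin 2) ℤ) 1 0).natAbs ?_ g' hg' le_rfl
                rw [e1]; omega
    intro g hg hcn
    exact inner ((g : Matrix (Fin 2) (Fin 2) ℤ) 0 0).natAbs g hg hcn le_rfl
  exact key ((g₀ : Matrix (Fin 2) (Fin 2) ℤ) 1 0).natAbs g₀ hg₀ le_rfl

end AuxHelpers

/-- The subgroup `{A ∈ Γ(2) : 4 ∣ c}` of `SL(2, ℤ)` is generated by the four matrices
`−I`, `A₁ = (1, 2; 0, 1)`, `A₂ = (5, −4; 4, −3)` and `A₃ = (−3, 2; −8, 5)`. -/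
theorem closure_eq_Gamma2_inter_lowerLeftDvd4
    (A₁ A₂ A₃ : Matrix.SpecialLinearGroup (Fin 2) ℤ)
    (h₁ : (A₁ : Matrix (Fin 2) (Fin 2) ℤ) = !![1, 2; 0, 1])
    (h₂ : (A₂ : Matrix (Fin 2) (Fin 2) ℤ) = !![5, -4; 4, -3])
    (h₃ : (A₃ : Matrix (Fin 2) (Fin 2) ℤ) = !![-3, 2; -8, 5]) :
    Subgroup.closure {(-1 : Matrix.SpecialLinearGroup (Fin 2) ℤ), A₁, A₂, A₃} =
      Gamma 2 ⊓ lowerLeftDvd 4 := by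
  have hnegcoe : ((-1 : Matrix.SpecialLinearGroup (Fin 2) ℤ) : Matrix (Fin 2) (Fin 2) ℤ)
      = !![-1,0;0,-1] := by
    rw [Matrix.SpecialLinearGroup.coe_neg, Matrix.SpecialLinearGroup.coe_one,
      Matrix.eta_fin_two (-(1 : Matrix (Fin 2) (Fin 2) ℤ))]
    norm_num
  apply le_antisymm
  · rw [Subgroup.closure_le]
    rintro x hx
    simp only [Set.mem_insert_iff, Set.mem_singleton_iff] at hx
    rcases hx with rfl | rfl | rfl | rfl
    · exact aux_memH _ (-1) 0 0 (-1) hnegcoe (by norm_num) (by norm_num) (by norm_num) (by norm_num)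
    · exact aux_memH _ 1 2 0 1 h₁ (by norm_num) (by norm_num) (by norm_num) (by norm_num)
    · exact aux_memH _ 5 (-4) 4 (-3) h₂ (by norm_num) (by norm_num) (by norm_num) (by norm_num)
    · exact aux_memH _ (-3) 2 (-8) 5 h₃ (by norm_num) (by norm_num) (by norm_num) (by norm_num)
  · intro g hg
    have m0 : (-1 : Matrix.SpecialLinearGroup (Fin 2) ℤ) ∈
        Subgroup.closure {(-1 : Matrix.SpecialLinearGroup (Fin 2) ℤ), A₁, A₂, A₃} :=
      Subgroup.subset_closure (by simp)
    have m1 : A₁ ∈ Subgroup.closure {(-1 : Matrix.SpecialLinearGroup (Fin 2) ℤ), A₁, A₂, A₃} :=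
      Subgroup.subset_closure (by simp)
    have m2 : A₂ ∈ Subgroup.closure {(-1 : Matrix.SpecialLinearGroup (Fin 2) ℤ), A₁, A₂, A₃} :=
      Subgroup.subset_closure (by simp)
    have m3 : A₃ ∈ Subgroup.closure {(-1 : Matrix.SpecialLinearGroup (Fin 2) ℤ), A₁, A₂, A₃} :=
      Subgroup.subset_closure (by simp)
    have hLcoe : ((A₃ * A₂⁻¹ * A₁ : Matrix.SpecialLinearGroup (Fin 2) ℤ)
        : Matrix (Fin 2) (Fin 2) ℤ) = !![1,0;4,1] := by
      rw [Matrix.SpecialLinearGroup.coe_mul, Matrix.SpecialLinearGroup.coe_mul,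
        aux_coe_inv A₂ 5 (-4) 4 (-3) h₂, h₃, h₁]
      norm_num [Matrix.mul_fin_two]
    have hNcoe : ((A₁⁻¹ * A₂ : Matrix.SpecialLinearGroup (Fin 2) ℤ)
        : Matrix (Fin 2) (Fin 2) ℤ) = !![-3,2;4,-3] := by
      rw [Matrix.SpecialLinearGroup.coe_mul, aux_coe_inv A₁ 1 2 0 1 h₁, h₂]
      norm_num [Matrix.mul_fin_two]
    exact aux_hard A₁ (A₃ * A₂⁻¹ * A₁) (A₁⁻¹ * A₂) h₁ hLcoe hNcoe _
      m1 (Subgroup.mul_mem _ (Subgroup.mul_mem _ m3 (Subgroup.inv_mem _ m2)) m1)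
      (Subgroup.mul_mem _ (Subgroup.inv_mem _ m1) m2) m0 g hg
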